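/- arXiv:1601.03038 — 3 statements merged into one kernel-verified Lean document; each statement's English description precedes it below -/
import Mathlib

section
/- (Riemann–Roch theorem for graphs, Baker–Norine) Let G be a finite connected loopless multigraph with n vertices and m edges, and let κ be the canonical divisor defined by κ(v) = deg(v) − 2 for all vertices v, so that deg(κ) = 2(m − n). Then every divisor f on G satisfies ρ(f) − ρ(κ − f) = deg(f) − g + 1, where g = m − n + 1 is the genus of G. -/
/-- A finite loopless multigraph on vertex set `V`, given by its symmetric
edge-multiplicity function `e`. -/
structure Multigraph (V : Type*) [Fintype V] [DecidableEq V] where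
  e : V → V → ℕ
  symm : ∀ u v, e u v = e v u
  loopless : ∀ v, e v v = 0

namespace Multigraph

variable {V : Type*} [Fintype V] [DecidableEq V]

/-- The degree of a vertex of a multigraph. -/
def vdeg (G : Multigraph V) (v : V) : ℕ := ∑ u, G.e v u

/-- The number of edges of a multigraph. -/
def edgeCount (G : Multigraph V) : ℕ := (∑ u, ∑ v, G.e u v) / 2

/-- The underlying simple graph (adjacency) of a multigraph. -/
def toSimple (G : Multigraph V) : SimpleGraph V where
  Adj u v := G.e u v ≠ 0
  symm := ⟨by intro u v h; rwa [G.symm]⟩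
  loopless := ⟨by intro v h; exact h (G.loopless v)⟩

/-- A multigraph is connected if its underlying simple graph is. -/
def Connected (G : Multigraph V) : Prop := G.toSimple.Connected

/-- The degree of a divisor `f : V → ℤ`. -/
def degree (f : V → ℤ) : ℤ := ∑ v, f v

/-- A divisor is effective if all its values are nonnegative. -/
def Effective (f : V → ℤ) : Prop := ∀ v, 0 ≤ f v

/-- The divisor `x · Δ_G`, where `Δ_G` is the Laplacian matrix of `G`. -/
def lapApply (G : Multigraph V) (x : V → ℤ) : V → ℤ :=
  fun v => x v * (G.vdeg v : ℤ) - ∑ u, x u * (G.e u v : ℤ)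

/-- Linear equivalence of divisors: `g = f + x Δ_G` for some `x : V → ℤ`. -/
def LinEquiv (G : Multigraph V) (f g : V → ℤ) : Prop :=
  ∃ x : V → ℤ, g = f + G.lapApply x

/-- A divisor is L-effective if it is linearly equivalent to an effective divisor. -/
def LEffective (G : Multigraph V) (f : V → ℤ) : Prop :=
  ∃ g : V → ℤ, G.LinEquiv f g ∧ Effective g

/-- The Baker–Norine rank of a divisor: `-1` if `f` is not L-effective, and
otherwise the largest `r ≥ 0` such that `f - λ` is L-effective for every
effective divisor `λ` of degree `r`. -/
noncomputable def rank (G : Multigraph V) (f : V → ℤ) : ℤ :=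
  sSup ({-1} ∪ {r : ℤ | 0 ≤ r ∧
    ∀ l : V → ℤ, Effective l → degree l = r → G.LEffective (f - l)})

/-- The divisor `ε_v`. -/
def epsDiv (v : V) : V → ℤ := fun u => if u = v then 1 else 0

/-- A tree: a connected acyclic (multi)graph. -/
def IsTree (G : Multigraph V) : Prop :=
  G.toSimple.IsTree ∧ ∀ u v, G.e u v ≤ 1

/-- A cycle graph: connected, and every vertex has degree 2. -/
def IsCycleGraph (G : Multigraph V) : Prop :=
  G.Connected ∧ ∀ v, G.vdeg v = 2

/-- An edge: two vertices joined by a single edge. -/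
def IsEdgeGraph (G : Multigraph V) : Prop :=
  Fintype.card V = 2 ∧ G.Connected ∧ ∀ u v, G.e u v ≤ 1

/-- A good divisor (on a cycle): degree `0` and linearly equivalent to `0`. -/
def Good (G : Multigraph V) (f : V → ℤ) : Prop :=
  degree f = 0 ∧ G.LinEquiv f 0

/-- A bad divisor (on a cycle): degree `0` and not linearly equivalent to `0`. -/
def Bad (G : Multigraph V) (f : V → ℤ) : Prop :=
  degree f = 0 ∧ ¬ G.LinEquiv f 0

/-- The induced sub-multigraph on a finite set `S` of vertices. -/
def induce (G : Multigraph V) (S : Finset V) : Multigraph {x // x ∈ S} where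
  e a b := G.e a.1 b.1
  symm := fun a b => G.symm a.1 b.1
  loopless := fun a => G.loopless a.1

/-- `v` decomposes the induced subgraph of `G` on `S` into the induced
subgraphs on `V1` and `U`: they cover `S`, meet exactly in `v`, are both
connected, and there is no edge between `V1 \ {v}` and `U \ {v}`. -/
def DecompOn (G : Multigraph V) (S : Finset V) (v : V) (V1 U : Finset V) : Prop :=
  V1 ∪ U = S ∧ V1 ∩ U = {v} ∧
  (G.induce V1).Connected ∧ (G.induce U).Connected ∧
  ∀ a ∈ V1, ∀ b ∈ U, a ≠ v → b ≠ v → G.e a b = 0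

/-- `v` decomposes `G` into the induced subgraphs on `V1` and `U`. -/
def Decomp (G : Multigraph V) (v : V) (V1 U : Finset V) : Prop :=
  G.DecompOn Finset.univ v V1 U

/-- The contraction `f_{G/H}` of a divisor `f`, where `H = G(U)` and
`G/H = G(V1)`, the cut vertex being `v`. -/
def contractDiv (f : V → ℤ) (v : V) (V1 U : Finset V) : {x // x ∈ V1} → ℤ :=
  fun u => if u.1 = v then ∑ w ∈ U, f w else f u.1

/-- The zero `f_{N(H)}` of a divisor `f`, where `H = G(U)`, the cut vertex
being `v`. -/
def zeroDiv (f : V → ℤ) (v : V) (U : Finset V) : {x // x ∈ U} → ℤ :=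
  fun u => if u.1 = v then - ∑ w ∈ U.erase v, f w else f u.1

/-- `ε_v` as a divisor on an induced subgraph. -/
def epsDivOn (S : Finset V) (v : V) : {x // x ∈ S} → ℤ :=
  fun u => if u.1 = v then 1 else 0

/-- A simple cycle of `G`, given as a sub-multigraph (an edge-multiplicity
function bounded by that of `G`) which is connected on its support and in
which every vertex of its (nonempty) support has degree 2. -/
def IsCycleSubgraph (G : Multigraph V) (h : V → V → ℕ) : Prop :=
  (∀ u v, h u v ≤ G.e u v) ∧ (∀ u v, h u v = h v u) ∧
  (∀ v, (∑ u, h v u = 0) ∨ (∑ u, h v u = 2)) ∧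
  (∃ v, ∑ u, h v u ≠ 0) ∧
  (∀ v w, (∑ u, h v u ≠ 0) → (∑ u, h w u ≠ 0) →
    Relation.ReflTransGen (fun a b => h a b ≠ 0) v w)

/-- The vertex support of a sub-multigraph. -/
def cycleSupport (h : V → V → ℕ) : Finset V :=
  Finset.univ.filter (fun v => ∑ u, h v u ≠ 0)

/-- A cactus: a connected multigraph in which any two distinct simple cycles
have at most one vertex in common (in particular every edge has multiplicity
at most 2, since parallel edges form 2-cycles). -/
def IsCactus (G : Multigraph V) : Prop :=
  G.Connected ∧ (∀ u v, G.e u v ≤ 2) ∧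
  ∀ h₁ h₂ : V → V → ℕ, G.IsCycleSubgraph h₁ → G.IsCycleSubgraph h₂ → h₁ ≠ h₂ →
    (cycleSupport h₁ ∩ cycleSupport h₂).card ≤ 1

/-- One step of a block elimination scheme: `G(S')` is obtained from `G(S)`
by contracting a free block (an edge or a cycle) `G(U)` at the vertex `v`. -/
def BlockStep (G : Multigraph V) (S S' : Finset V) : Prop :=
  ∃ (v : V) (U : Finset V), G.DecompOn S v S' U ∧
    ((G.induce U).IsEdgeGraph ∨ (G.induce U).IsCycleGraph)

/-- A block elimination scheme: a sequence of contractions of free blocks,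
starting from `G` and ending at a single vertex. -/
def HasBlockEliminationScheme (G : Multigraph V) : Prop :=
  ∃ (k : ℕ) (S : ℕ → Finset V), S 0 = Finset.univ ∧ (S k).card = 1 ∧
    ∀ i < k, G.BlockStep (S i) (S (i + 1))

end Multigraph

open Multigraph

variable {V : Type*} [Fintype V] [DecidableEq V]

/-!
As in Baker and Norine's proof, for an injective ordering `r` of the vertices let `ν_r(v)`
(`orderDiv`) be the number of edges from `v` to earlier vertices, minus one. No `ν_r` is
L-effective, reversing `r` gives `ν_{r'} = κ - ν_r`, and `deg ν_r = m - n`. Dhar's burning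
algorithm, made to terminate by a nonnegative potential `w` whose Laplacian is a positive constant
away from a base vertex, shows that every divisor is either L-effective or equivalent to a divisor
below some `ν_r`. Hence `ρ(f) + 1` is the minimum of `deg (f' - ν_r)⁺` over `f' ∼ f` and orderings
`r`. As `κ - f' - ν_{r'} = -(f' - ν_r)` and `deg (-D)⁺ = deg D⁺ - deg D`, the minimum for `κ - f`
is at most the one for `f` shifted by `m - n - deg f`; applied to `f` and to `κ - f` this is
Riemann–Roch.
-/

namespace Multigraph

open Finset Function Module

variable (G : Multigraph V)

section Laplacian

variable (R : Type*) [CommRing R]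

def laplacian : (V → R) →ₗ[R] (V → R) where
  toFun x v := x v * (G.vdeg v : R) - ∑ u, x u * (G.e u v : R)
  map_add' x y := by
    funext v
    simp only [Pi.add_apply, add_mul, sum_add_distrib]
    ring
  map_smul' a x := by
    funext v
    simp only [Pi.smul_apply, smul_eq_mul, RingHom.id_apply, mul_assoc, ← mul_sum]
    ring

theorem lapApply_eq_laplacian (x : V → ℤ) : G.lapApply x = G.laplacian ℤ x := rfl

variable {R}

theorem laplacian_apply (x : V → R) (v : V) :
    G.laplacian R x v = ∑ u, (x v - x u) * (G.e u v : R) := by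
  simp only [laplacian, LinearMap.coe_mk, AddHom.coe_mk, vdeg, Nat.cast_sum, mul_sum, sub_mul,
    sum_sub_distrib, G.symm v]

theorem laplacian_const (a : R) : G.laplacian R (fun _ => a) = 0 := by
  funext v
  simp [laplacian_apply]

theorem sum_laplacian (x : V → R) : ∑ v, G.laplacian R x v = 0 := by
  simp only [laplacian, LinearMap.coe_mk, AddHom.coe_mk, vdeg, Nat.cast_sum, mul_sum,
    sum_sub_distrib, sub_eq_zero]
  rw [sum_comm]

theorem sum_mul_laplacian_comm (x y : V → R) :
    ∑ v, x v * G.laplacian R y v = ∑ v, y v * G.laplacian R x v := by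
  have hswap : ∑ v, ∑ u, x v * (y u * (G.e u v : R)) = ∑ v, ∑ u, y v * (x u * (G.e u v : R)) := by
    rw [sum_comm]
    simp only [G.symm, mul_left_comm]
  simp only [laplacian, LinearMap.coe_mk, AddHom.coe_mk, mul_sub, mul_sum, sum_sub_distrib, hswap]
  simp only [mul_left_comm]

theorem laplacian_comp_ringHom {S : Type*} [CommRing S] (φ : R →+* S) (x : V → R) :
    G.laplacian S (φ ∘ x) = φ ∘ G.laplacian R x := by
  funext v
  simp [laplacian_apply]

end Laplacian

section OrderedRing

variable {R : Type*} [CommRing R] [LinearOrder R] [IsStrictOrderedRing R]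

theorem laplacian_apply_nonpos_of_forall_le {x : V → R} {v : V} (hv : ∀ u, x v ≤ x u) :
    G.laplacian R x v ≤ 0 := by
  rw [laplacian_apply]
  exact sum_nonpos fun u _ =>
    mul_nonpos_of_nonpos_of_nonneg (sub_nonpos.2 (hv u)) (Nat.cast_nonneg _)

theorem eq_of_adj_of_laplacian_apply_eq_zero {x : V → R} {v u : V} (hv : ∀ w, x w ≤ x v)
    (hx : G.laplacian R x v = 0) (hvu : G.toSimple.Adj v u) : x u = x v := by
  rw [laplacian_apply] at hx
  have hterm := (sum_eq_zero_iff_of_nonneg fun w _ =>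
    mul_nonneg (sub_nonneg.2 (hv w)) (Nat.cast_nonneg (G.e w v))).1 hx u (mem_univ u)
  have he : (G.e u v : R) ≠ 0 := by
    rw [G.symm]
    exact_mod_cast hvu
  linarith [(mul_eq_zero.1 hterm).resolve_right he]

end OrderedRing

section OrderedField

variable {R : Type*} [Field R] [LinearOrder R] [IsStrictOrderedRing R]

theorem ker_laplacian (hG : G.Connected) :
    LinearMap.ker (G.laplacian R) = R ∙ (1 : V → R) := by
  refine le_antisymm (fun x hx => ?_) ((Submodule.span_singleton_le_iff_mem _ _).2 ?_)
  · have hx : G.laplacian R x = 0 := hx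
    obtain ⟨v, -, hv⟩ := exists_max_image univ x (univ_nonempty_iff.2 hG.nonempty)
    have hmax : ∀ a b, G.toSimple.Reachable a b → x a = x v → x b = x v := by
      rintro a b ⟨p⟩
      induction p with
      | nil => exact id
      | cons hadj p ih =>
        intro ha
        refine ih ?_
        rw [← ha]
        exact G.eq_of_adj_of_laplacian_apply_eq_zero (fun w => ha ▸ hv w (mem_univ w))
          (congrFun hx _) hadj
    refine Submodule.mem_span_singleton.2 ⟨x v, funext fun u => ?_⟩
    simp [hmax v u (hG.preconnected v u) rfl]
  · exact G.laplacian_const 1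

theorem exists_laplacian_eq (hG : G.Connected) {c : V → R} (hc : ∑ v, c v = 0) :
    ∃ x, G.laplacian R x = c := by
  have : Nonempty V := hG.nonempty
  let deg : (V → R) →ₗ[R] R := ∑ v, LinearMap.proj v
  have hdeg : ∀ y, deg y = ∑ v, y v := fun y => by simp [deg]
  have hdeg_surj : LinearMap.range deg = ⊤ := LinearMap.range_eq_top.2 fun a =>
    ⟨Pi.single (Classical.arbitrary V) a, by simp [hdeg]⟩
  -- both sides have dimension `card V - 1`, by rank-nullity
  have hrange : LinearMap.range (G.laplacian R) = LinearMap.ker deg := by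
    refine Submodule.eq_of_le_of_finrank_le ?_ ?_
    · rintro y ⟨x, rfl⟩
      rw [LinearMap.mem_ker, hdeg, G.sum_laplacian]
    · have h1 := LinearMap.finrank_range_add_finrank_ker (G.laplacian R)
      have h2 := LinearMap.finrank_range_add_finrank_ker deg
      rw [G.ker_laplacian hG, finrank_span_singleton one_ne_zero] at h1
      rw [hdeg_surj, finrank_top, finrank_self] at h2
      omega
  have hc' : c ∈ LinearMap.ker deg := by rw [LinearMap.mem_ker, hdeg, hc]
  rwa [← hrange] at hc'

end OrderedField

section LinearEquivalence

variable {G}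

omit [DecidableEq V] in
@[simp]
theorem degree_add (f g : V → ℤ) : degree (f + g) = degree f + degree g := sum_add_distrib

omit [DecidableEq V] in
@[simp]
theorem degree_sub (f g : V → ℤ) : degree (f - g) = degree f - degree g := sum_sub_distrib f g

theorem degree_single (v : V) (a : ℤ) : degree (Pi.single v a) = a := by
  simp [degree]

omit [DecidableEq V] in
theorem degree_posPart_nonneg (f : V → ℤ) : 0 ≤ degree f⁺ :=
  sum_nonneg fun v _ => posPart_nonneg (f v)

omit [DecidableEq V] in
theorem degree_posPart_neg (f : V → ℤ) : degree (-f)⁺ = degree f⁺ - degree f := by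
  have := congrArg degree (posPart_sub_negPart f)
  rw [degree_sub] at this
  rw [posPart_neg]
  linarith

theorem degree_lapApply (x : V → ℤ) : degree (G.lapApply x) = 0 := G.sum_laplacian x

namespace LinEquiv

theorem refl (f : V → ℤ) : G.LinEquiv f f :=
  ⟨0, by rw [lapApply_eq_laplacian, map_zero, add_zero]⟩

variable {f g h : V → ℤ}

theorem symm (hfg : G.LinEquiv f g) : G.LinEquiv g f := by
  obtain ⟨x, rfl⟩ := hfg
  exact ⟨-x, by rw [lapApply_eq_laplacian, lapApply_eq_laplacian, map_neg]; abel⟩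

theorem trans (hfg : G.LinEquiv f g) (hgh : G.LinEquiv g h) : G.LinEquiv f h := by
  obtain ⟨x, rfl⟩ := hfg
  obtain ⟨y, rfl⟩ := hgh
  exact ⟨x + y, by simp only [lapApply_eq_laplacian, map_add]; abel⟩

theorem add_right (hfg : G.LinEquiv f g) (c : V → ℤ) : G.LinEquiv (f + c) (g + c) := by
  obtain ⟨x, rfl⟩ := hfg
  exact ⟨x, by abel⟩

theorem const_sub (hfg : G.LinEquiv f g) (c : V → ℤ) : G.LinEquiv (c - f) (c - g) := by
  obtain ⟨x, rfl⟩ := hfg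
  exact ⟨-x, by rw [lapApply_eq_laplacian, lapApply_eq_laplacian, map_neg]; abel⟩

theorem degree_eq (hfg : G.LinEquiv f g) : degree g = degree f := by
  obtain ⟨x, rfl⟩ := hfg
  rw [degree_add, degree_lapApply, add_zero]

end LinEquiv

namespace LEffective

variable {f g : V → ℤ}

theorem of_effective (hf : Effective f) : G.LEffective f := ⟨f, .refl f, hf⟩

theorem of_linEquiv (hfg : G.LinEquiv f g) (hg : G.LEffective g) : G.LEffective f := by
  obtain ⟨h, hgh, hh⟩ := hg
  exact ⟨h, hfg.trans hgh, hh⟩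

theorem mono (hf : G.LEffective f) (hfg : f ≤ g) : G.LEffective g := by
  obtain ⟨h, hfh, hh⟩ := hf
  refine ⟨h + (g - f), by simpa using hfh.symm.add_right (g - f) |>.symm, fun v => ?_⟩
  have := hfg v
  simp only [Pi.add_apply, Pi.sub_apply]
  linarith [hh v]

end LEffective

end LinearEquivalence

theorem exists_lapApply_eq_smul (hG : G.Connected) {c : V → ℤ} (hc : ∑ v, c v = 0) :
    ∃ x : V → ℤ, ∃ d : ℤ, 0 < d ∧ G.lapApply x = d • c := by
  obtain ⟨y, hy⟩ := G.exists_laplacian_eq (R := ℚ) hG (c := Int.cast ∘ c)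
    (by simp [← Int.cast_sum, hc])
  set d : ℤ := ∏ v, ((y v).den : ℤ)
  let x : V → ℤ := fun v => (y v).num * ∏ u ∈ univ.erase v, ((y u).den : ℤ)
  have hxy : Int.cast ∘ x = (d : ℚ) • y := by
    funext v
    simp only [x, d, comp_apply, Pi.smul_apply, smul_eq_mul, Int.cast_mul, Int.cast_prod,
      Int.cast_natCast, ← mul_prod_erase univ (fun u => ((y u).den : ℚ)) (mem_univ v),
      ← Rat.mul_den_eq_num]
    ring
  refine ⟨x, d, prod_pos fun v _ => by exact_mod_cast (y v).pos, funext fun v => ?_⟩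
  have := congrFun (G.laplacian_comp_ringHom (Int.castRingHom ℚ) x) v
  rw [Int.coe_castRingHom, hxy, map_smul, hy] at this
  simp only [Pi.smul_apply, comp_apply, smul_eq_mul] at this
  exact_mod_cast this.symm

theorem exists_nonneg_lapApply_eq_const (hG : G.Connected) (q : V) :
    ∃ w : V → ℤ, ∃ k : ℤ, 0 < k ∧ 0 ≤ w ∧ w q = 0 ∧ ∀ v ≠ q, G.lapApply w v = k := by
  obtain ⟨x, k, hk, hx⟩ := G.exists_lapApply_eq_smul hG
    (c := 1 - Pi.single q (Fintype.card V : ℤ)) (by simp [sum_sub_distrib])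
  set w : V → ℤ := x - fun _ => x q
  have hw : G.lapApply w = k • (1 - Pi.single q (Fintype.card V : ℤ)) := by
    simp only [w, lapApply_eq_laplacian, map_sub, laplacian_const, sub_zero, ← hx]
  have hwk : ∀ v ≠ q, G.lapApply w v = k := fun v hv => by simp [hw, hv]
  refine ⟨w, k, hk, fun v => ?_, by simp [w], hwk⟩
  obtain ⟨v₀, -, hv₀⟩ := exists_min_image univ w ⟨q, mem_univ q⟩
  by_contra! hneg
  have hv₀q : v₀ ≠ q := by
    rintro rfl
    have := hv₀ v (mem_univ v)
    simp only [w, Pi.sub_apply, Pi.zero_apply, sub_self] at this hneg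
    linarith
  have := G.laplacian_apply_nonpos_of_forall_le (fun u => hv₀ u (mem_univ u))
  rw [← lapApply_eq_laplacian, hwk v₀ hv₀q] at this
  linarith

def canonical : V → ℤ := fun v => (G.vdeg v : ℤ) - 2

def orderDiv (r : V → ℕ) : V → ℤ := fun v => (∑ u with r u < r v, (G.e u v : ℤ)) - 1

theorem orderDiv_not_lEffective [Nonempty V] (r : V → ℕ) : ¬ G.LEffective (G.orderDiv r) := by
  rintro ⟨g, ⟨x, rfl⟩, hg⟩
  -- at the earliest minimum `v` of `x`, `v` loses a chip along every edge to an earlier vertex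
  obtain ⟨v₀, -, hv₀⟩ := exists_min_image univ x univ_nonempty
  obtain ⟨v, hv, hvr⟩ := exists_min_image {v | ∀ u, x v ≤ x u} r
    ⟨v₀, by simpa using fun u => hv₀ u (mem_univ u)⟩
  simp only [mem_filter, mem_univ, true_and] at hv hvr
  have hlt : ∀ u, r u < r v → x v + 1 ≤ x u := by
    intro u hu
    by_contra! h
    have := hvr u fun w => by linarith [hv w]
    omega
  have hΔ : G.lapApply x v ≤ -∑ u with r u < r v, (G.e u v : ℤ) := by
    rw [lapApply_eq_laplacian, laplacian_apply, sum_filter, ← sum_neg_distrib]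
    refine sum_le_sum fun u _ => ?_
    have he : (0 : ℤ) ≤ G.e u v := Int.natCast_nonneg _
    split_ifs with hu
    · nlinarith [hlt u hu]
    · nlinarith [hv u]
  have := hg v
  simp only [Pi.add_apply, orderDiv] at this
  linarith

theorem vdeg_eq_sum_lt_add_sum_gt {r : V → ℕ} (hr : Injective r) (v : V) :
    G.vdeg v = ∑ u with r u < r v, G.e u v + ∑ u with r v < r u, G.e u v := by
  rw [sum_filter, sum_filter, ← sum_add_distrib, vdeg]
  refine sum_congr rfl fun u _ => ?_
  rw [G.symm v u]
  rcases lt_trichotomy (r u) (r v) with h | h | h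
  · simp [h, h.not_gt]
  · simp [hr h, G.loopless]
  · simp [h, h.not_gt]

theorem exists_orderDiv_eq_canonical_sub {r : V → ℕ} (hr : Injective r) :
    ∃ r', Injective r' ∧ G.orderDiv r' = G.canonical - G.orderDiv r := by
  set C := univ.sup r
  have hC : ∀ v, r v ≤ C := fun v => le_sup (mem_univ v)
  refine ⟨fun v => C - r v, fun a b hab => hr ?_, funext fun v => ?_⟩
  · have := hC a
    have := hC b
    simp only at hab
    omega
  · have hflip : ∀ u, C - r u < C - r v ↔ r v < r u := fun u => by
      have := hC u
      have := hC v
      omega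
    simp only [orderDiv, canonical, Pi.sub_apply, hflip, G.vdeg_eq_sum_lt_add_sum_gt hr v]
    push_cast
    ring

theorem degree_orderDiv {r : V → ℕ} (hr : Injective r) :
    degree (G.orderDiv r) = G.edgeCount - Fintype.card V := by
  have hswap : ∑ v, ∑ u with r v < r u, G.e u v = ∑ v, ∑ u with r u < r v, G.e u v := by
    simp only [sum_filter]
    rw [sum_comm]
    simp only [G.symm]
  have hedges : G.edgeCount = ∑ v, ∑ u with r u < r v, G.e u v := by
    have : ∑ u, ∑ v, G.e u v = ∑ v, G.vdeg v := rfl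
    rw [edgeCount, this]
    simp only [G.vdeg_eq_sum_lt_add_sum_gt hr, sum_add_distrib, hswap]
    omega
  simp only [degree, orderDiv, sum_sub_distrib, hedges]
  push_cast
  simp

theorem degree_canonical : degree G.canonical = 2 * (G.edgeCount - Fintype.card V) := by
  obtain ⟨r, hr⟩ := Countable.exists_injective_nat V
  obtain ⟨r', hr', hrr'⟩ := G.exists_orderDiv_eq_canonical_sub hr
  rw [← sub_add_cancel G.canonical (G.orderDiv r), ← hrr', degree_add, G.degree_orderDiv hr,
    G.degree_orderDiv hr']
  ring

-- Dhar's burning algorithm, from the fire `A` lit in the order `r`: a vertex catches fire when it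
-- holds fewer chips than edges into the fire. If everything burns, the order of burning gives
-- `f ≤ ν_r`; otherwise the vertices outside the fire can all fire at once.
theorem exists_le_orderDiv_or_exists_firable (f : V → ℤ) (A : Finset V) {r : V → ℕ}
    (hr : Injective r) (hA : ∀ v ∈ A, f v < ∑ u ∈ A with r u < r v, (G.e u v : ℤ)) :
    (∃ r, Injective r ∧ f ≤ G.orderDiv r) ∨
      ∃ B : Finset V, A ⊆ B ∧ B ≠ univ ∧ ∀ v ∉ B, ∑ u ∈ B, (G.e u v : ℤ) ≤ f v := by
  by_cases hAu : A = univ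
  · subst hAu
    refine Or.inl ⟨r, hr, fun v => ?_⟩
    have := hA v (mem_univ v)
    simp only [orderDiv]
    omega
  by_cases hw : ∃ w ∉ A, f w < ∑ u ∈ A, (G.e u w : ℤ)
  · obtain ⟨w, hwA, hw⟩ := hw
    set M := univ.sup r + 1
    have hM : ∀ v, r v < M := fun v => Nat.lt_succ_of_le (le_sup (mem_univ v))
    set r' : V → ℕ := fun v => if v = w then M else r v
    have hr' : Injective r' := by
      intro a b hab
      simp only [r'] at hab
      split_ifs at hab with ha hb hb
      · rw [ha, hb]
      · exact absurd hab (hM b).ne'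
      · exact absurd hab (hM a).ne
      · exact hr hab
    have hA' : ∀ v ∈ insert w A, f v < ∑ u ∈ insert w A with r' u < r' v, (G.e u v : ℤ) := by
      intro v hv
      rcases mem_insert.1 hv with rfl | hv
      · rwa [filter_insert, if_neg (by simp [r']), filter_true_of_mem fun u hu => by
          simp [r', ne_of_mem_of_not_mem hu hwA, hM]]
      · have hvw : v ≠ w := ne_of_mem_of_not_mem hv hwA
        rw [filter_insert, if_neg (by simp [r', hvw, (hM v).not_gt])]
        convert hA v hv using 2
        exact filter_congr fun u hu => by simp [r', hvw, ne_of_mem_of_not_mem hu hwA]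
    rcases exists_le_orderDiv_or_exists_firable f (insert w A) hr' hA' with
      h | ⟨B, hAB, hB, hBf⟩
    · exact Or.inl h
    · exact Or.inr ⟨B, (subset_insert w A).trans hAB, hB, hBf⟩
  · push Not at hw
    exact Or.inr ⟨A, Subset.rfl, hAu, hw⟩
termination_by Fintype.card V - A.card
decreasing_by
  rw [card_insert_of_notMem hwA]
  have := card_lt_univ_of_notMem hwA
  omega

theorem lapApply_fire_nonneg {B : Finset V} {v : V} (hv : v ∈ B) :
    0 ≤ G.lapApply (fun u => if u ∈ B then 0 else -1) v := by
  rw [lapApply_eq_laplacian, laplacian_apply]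
  refine sum_nonneg fun u _ => mul_nonneg ?_ (Int.natCast_nonneg _)
  split_ifs <;> simp_all

theorem lapApply_fire_of_notMem {B : Finset V} {v : V} (hv : v ∉ B) :
    G.lapApply (fun u => if u ∈ B then 0 else -1) v = -∑ u ∈ B, (G.e u v : ℤ) := by
  rw [lapApply_eq_laplacian, laplacian_apply, ← sum_neg_distrib, ← filter_univ_mem B, sum_filter]
  exact sum_congr rfl fun u _ => by split_ifs <;> simp_all

section Potential

variable {G} {q : V} {w : V → ℤ} {k : ℤ}

/-- Fire every vertex outside `B` once. -/
theorem exists_linEquiv_sum_mul_lt (hk : 0 < k) (hΔw : ∀ v ≠ q, G.lapApply w v = k)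
    {f : V → ℤ} (hf : ∀ v ≠ q, 0 ≤ f v) {B : Finset V} (hqB : q ∈ B) (hB : B ≠ univ)
    (hBf : ∀ v ∉ B, ∑ u ∈ B, (G.e u v : ℤ) ≤ f v) :
    ∃ f', G.LinEquiv f f' ∧ (∀ v ≠ q, 0 ≤ f' v) ∧ ∑ v, f' v * w v < ∑ v, f v * w v := by
  set x : V → ℤ := fun u => if u ∈ B then 0 else -1
  refine ⟨f + G.lapApply x, ⟨x, rfl⟩, fun v hv => ?_, ?_⟩
  · by_cases hvB : v ∈ B
    · simp only [Pi.add_apply, x]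
      linarith [hf v hv, G.lapApply_fire_nonneg hvB]
    · simp only [Pi.add_apply, x, G.lapApply_fire_of_notMem hvB]
      linarith [hBf v hvB]
  obtain ⟨v₀, hv₀⟩ : ∃ v₀, v₀ ∉ B := by simpa [eq_univ_iff_forall] using hB
  have hterm : ∀ v, x v * G.lapApply w v = if v ∈ B then 0 else -k := fun v => by
    by_cases hv : v ∈ B
    · simp [x, hv]
    · simp [x, hv, hΔw v (ne_of_mem_of_not_mem hqB hv).symm]
  have hsymm : ∑ v, G.lapApply x v * w v = ∑ v, x v * G.lapApply w v := by
    simp only [lapApply_eq_laplacian, mul_comm _ (w _)]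
    exact G.sum_mul_laplacian_comm w x
  have hrest : ∑ v ∈ univ.erase v₀, x v * G.lapApply w v ≤ 0 :=
    sum_nonpos fun v _ => by rw [hterm]; split_ifs <;> omega
  have hfire : ∑ v, G.lapApply x v * w v ≤ -k := by
    rw [hsymm, ← add_sum_erase univ _ (mem_univ v₀), hterm v₀, if_neg hv₀]
    omega
  simp only [Pi.add_apply, add_mul, sum_add_distrib]
  linarith

theorem lEffective_or_exists_le_orderDiv_of_nonneg_off (hk : 0 < k) (hw : 0 ≤ w)
    (hwq : w q = 0) (hΔw : ∀ v ≠ q, G.lapApply w v = k) (f : V → ℤ) (hf : ∀ v ≠ q, 0 ≤ f v) :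
    G.LEffective f ∨ ∃ g r, Injective r ∧ G.LinEquiv f g ∧ g ≤ G.orderDiv r := by
  by_cases hfq : 0 ≤ f q
  · refine Or.inl (.of_effective fun v => ?_)
    by_cases hv : v = q
    · exact hv ▸ hfq
    · exact hf v hv
  obtain ⟨r₀, hr₀⟩ := Countable.exists_injective_nat V
  rcases G.exists_le_orderDiv_or_exists_firable f {q} hr₀
    (by simpa [filter_singleton] using hfq) with ⟨r, hr, hfr⟩ | ⟨B, hqB, hB, hBf⟩
  · exact Or.inr ⟨f, r, hr, .refl f, hfr⟩
  obtain ⟨f', hff', hf', hlt⟩ :=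
    exists_linEquiv_sum_mul_lt hk hΔw hf (singleton_subset_iff.1 hqB) hB hBf
  rcases lEffective_or_exists_le_orderDiv_of_nonneg_off hk hw hwq hΔw f' hf' with
    h | ⟨g, r, hr, hg, hgr⟩
  · exact Or.inl (h.of_linEquiv hff')
  · exact Or.inr ⟨g, r, hr, hff'.trans hg, hgr⟩
termination_by (∑ v, f v * w v).toNat
decreasing_by
  have : 0 ≤ ∑ v, f' v * w v := sum_nonneg fun v _ => by
    by_cases hv : v = q
    · simp [hv, hwq]
    · exact mul_nonneg (hf' v hv) (hw v)
  omega

end Potential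

theorem lEffective_or_exists_le_orderDiv (hG : G.Connected) (f : V → ℤ) :
    G.LEffective f ∨ ∃ g r, Injective r ∧ G.LinEquiv f g ∧ g ≤ G.orderDiv r := by
  have : Nonempty V := hG.nonempty
  obtain ⟨w, k, hk, hw, hwq, hΔw⟩ := G.exists_nonneg_lapApply_eq_const hG (Classical.arbitrary V)
  set t := ∑ v, |f v|
  have hff₀ : G.LinEquiv f (f + G.lapApply (t • w)) := ⟨t • w, rfl⟩
  have hf₀ : ∀ v ≠ Classical.arbitrary V, 0 ≤ (f + G.lapApply (t • w)) v := by
    intro v hv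
    have ht : |f v| ≤ t := single_le_sum (fun u _ => abs_nonneg (f u)) (mem_univ v)
    have hΔ : G.lapApply (t • w) v = t * k := by
      rw [lapApply_eq_laplacian, map_smul, Pi.smul_apply, ← lapApply_eq_laplacian, hΔw v hv,
        smul_eq_mul]
    rw [Pi.add_apply, hΔ]
    nlinarith [neg_abs_le (f v), abs_nonneg (f v)]
  rcases lEffective_or_exists_le_orderDiv_of_nonneg_off hk hw hwq hΔw _ hf₀ with
    h | ⟨g, r, hr, hg, hgr⟩
  · exact Or.inl (h.of_linEquiv hff₀)
  · exact Or.inr ⟨g, r, hr, hff₀.trans hg, hgr⟩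

def rankSet (f : V → ℤ) : Set ℤ :=
  {-1} ∪ {r : ℤ | 0 ≤ r ∧ ∀ l : V → ℤ, Effective l → degree l = r → G.LEffective (f - l)}

theorem rank_eq_sSup_rankSet (f : V → ℤ) : G.rank f = sSup (G.rankSet f) := rfl

section Rank

variable {G} {f f' : V → ℤ}

theorem add_one_le_degree_posPart_of_mem_rankSet [Nonempty V] (hff' : G.LinEquiv f f')
    (r : V → ℕ) {s : ℤ} (hs : s ∈ G.rankSet f) : s + 1 ≤ degree (f' - G.orderDiv r)⁺ := by
  rcases hs with rfl | ⟨hs, hsl⟩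
  · simpa using degree_posPart_nonneg (f' - G.orderDiv r)
  by_contra! hlt
  set D := f' - G.orderDiv r
  set l := D⁺ + Pi.single (Classical.arbitrary V) (s - degree D⁺)
  have hsingle : 0 ≤ Pi.single (Classical.arbitrary V) (s - degree D⁺) :=
    Pi.single_nonneg (α := fun _ => ℤ) |>.2 (by omega)
  have hl : Effective l := fun v => add_nonneg (posPart_nonneg _) (hsingle v)
  have hfl : G.LEffective (f' - l) :=
    (hsl l hl (by simp [l, degree_single])).of_linEquiv
      (by simpa [sub_eq_add_neg] using hff'.symm.add_right (-l))
  refine G.orderDiv_not_lEffective r (hfl.mono fun v => ?_)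
  have hD : D v ≤ (D v)⁺ := le_posPart _
  have hsingle_v := hsingle v
  simp only [l, D, Pi.sub_apply, Pi.add_apply, Pi.posPart_apply, Pi.zero_apply] at hD hsingle_v ⊢
  linarith

theorem rank_add_one_le [Nonempty V] (hff' : G.LinEquiv f f') (r : V → ℕ) :
    G.rank f + 1 ≤ degree (f' - G.orderDiv r)⁺ := by
  rw [rank_eq_sSup_rankSet, ← le_sub_iff_add_le]
  exact csSup_le ⟨-1, Or.inl rfl⟩ fun s hs =>
    le_sub_iff_add_le.2 (add_one_le_degree_posPart_of_mem_rankSet hff' r hs)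

theorem exists_degree_posPart_le_of_notMem_rankSet (hG : G.Connected) {s : ℤ} (hs : 0 ≤ s)
    (h : s ∉ G.rankSet f) :
    ∃ f' r, Injective r ∧ G.LinEquiv f f' ∧ degree (f' - G.orderDiv r)⁺ ≤ s := by
  simp only [rankSet, Set.mem_union, Set.mem_singleton_iff, Set.mem_ofPred_eq, not_or, not_and,
    not_forall] at h
  obtain ⟨l, hl, hdeg, hfl⟩ := h.2 hs
  rcases G.lEffective_or_exists_le_orderDiv hG (f - l) with hfl' | ⟨g, r, hr, hg, hgr⟩
  · exact absurd hfl' hfl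
  refine ⟨g + l, r, hr, by simpa using hg.add_right l, hdeg ▸ sum_le_sum fun v _ => ?_⟩
  simp only [Pi.posPart_apply, Pi.sub_apply, Pi.add_apply]
  exact sup_le (by linarith [hgr v]) (hl v)

theorem exists_degree_posPart_le_rank_add_one (hG : G.Connected) (f : V → ℤ) :
    ∃ f' r, Injective r ∧ G.LinEquiv f f' ∧ degree (f' - G.orderDiv r)⁺ ≤ G.rank f + 1 := by
  classical
  have : Nonempty V := hG.nonempty
  obtain ⟨r₀, hr₀⟩ := Countable.exists_injective_nat V
  have hex : ∃ n : ℕ, ∃ f' r, Injective r ∧ G.LinEquiv f f' ∧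
      degree (f' - G.orderDiv r)⁺ = n :=
    ⟨_, f, r₀, hr₀, .refl f, (Int.toNat_of_nonneg (degree_posPart_nonneg _)).symm⟩
  obtain ⟨f', r, hr, hff', hn⟩ := Nat.find_spec hex
  refine ⟨f', r, hr, hff', ?_⟩
  have hbdd : BddAbove (G.rankSet f) := ⟨_, fun s hs =>
    le_sub_iff_add_le.2 (add_one_le_degree_posPart_of_mem_rankSet (.refl f) r₀ hs)⟩
  suffices hmem : degree (f' - G.orderDiv r)⁺ - 1 ∈ G.rankSet f by
    linarith [le_csSup hbdd hmem, rank_eq_sSup_rankSet G f]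
  by_contra hmem
  have hpos : 0 ≤ degree (f' - G.orderDiv r)⁺ - 1 := by
    have : degree (f' - G.orderDiv r)⁺ - 1 ≠ -1 := fun h => hmem (h ▸ Or.inl rfl)
    have := degree_posPart_nonneg (f' - G.orderDiv r)
    omega
  obtain ⟨f'', r'', hr'', hff'', hle⟩ := exists_degree_posPart_le_of_notMem_rankSet hG hpos hmem
  have := Nat.find_min' hex
    ⟨f'', r'', hr'', hff'', (Int.toNat_of_nonneg (degree_posPart_nonneg _)).symm⟩
  omega

end Rank

theorem rank_canonical_sub_le (hG : G.Connected) (f : V → ℤ) :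
    G.rank (G.canonical - f) ≤ G.rank f - degree f + (G.edgeCount - Fintype.card V) := by
  have : Nonempty V := hG.nonempty
  obtain ⟨f', r, hr, hff', hle⟩ := G.exists_degree_posPart_le_rank_add_one hG f
  obtain ⟨r', -, hr'⟩ := G.exists_orderDiv_eq_canonical_sub hr
  have hD : G.canonical - f' - G.orderDiv r' = -(f' - G.orderDiv r) := by
    rw [hr']
    abel
  have h := rank_add_one_le (hff'.const_sub G.canonical) r'
  rw [hD, degree_posPart_neg, degree_sub, hff'.degree_eq, G.degree_orderDiv hr] at h
  linarith

end Multigraph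

/-- Riemann–Roch for graphs, Baker–Norine:
`ρ(f) − ρ(κ − f) = deg(f) − g + 1` where `κ(v) = deg(v) − 2` and
`g = m − n + 1`. -/
theorem riemann_roch (G : Multigraph V) (hG : G.Connected) (f : V → ℤ) :
    G.rank f - G.rank ((fun w => (G.vdeg w : ℤ) - 2) - f)
      = degree f - ((G.edgeCount : ℤ) - (Fintype.card V : ℤ) + 1) + 1 := by
  change G.rank f - G.rank (G.canonical - f) = _
  have h₁ := G.rank_canonical_sub_le hG f
  have h₂ := G.rank_canonical_sub_le hG (G.canonical - f)
  rw [sub_sub_cancel, degree_sub, G.degree_canonical] at h₂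
  linarith
end

section
/- Let T be a tree (a finite connected acyclic graph) and let f be a divisor on T with deg(f) = 0. Then f is linearly equivalent to the zero divisor; in particular f is L-effective. -/
open Multigraph

variable {V : Type*} [Fintype V] [DecidableEq V]

/-! On a tree every edge `ab` is a simple bridge, so the indicator of the component of `b` in
`T - ab` has Laplacian `ε_b - ε_a`. Chaining these along paths puts every `ε_v - ε_r` in the
image of the Laplacian, and the `ε_v - ε_r` generate the divisors of degree `0`. -/

lemma SimpleGraph.Reachable.single_sub_single_mem {W : Type*} [DecidableEq W]
    {Γ : SimpleGraph W} {H : AddSubgroup (W → ℤ)}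
    (hadj : ∀ a b, Γ.Adj a b → Pi.single b 1 - Pi.single a 1 ∈ H) {a b : W}
    (hab : Γ.Reachable a b) : (Pi.single b 1 - Pi.single a 1 : W → ℤ) ∈ H := by
  obtain ⟨p⟩ := hab
  induction p with
  | nil => simp
  | cons h _ ih => simpa using H.add_mem (hadj _ _ h) ih

lemma AddSubgroup.mem_of_sum_eq_zero {H : AddSubgroup (V → ℤ)} (r : V)
    (hH : ∀ v, (Pi.single v 1 - Pi.single r 1 : V → ℤ) ∈ H) {f : V → ℤ}
    (hf : ∑ v, f v = 0) : f ∈ H := by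
  have hdecomp : f = ∑ v, f v • (Pi.single v 1 - Pi.single r 1 : V → ℤ) :=
    calc f = ∑ v, Pi.single v (f v) := (Finset.univ_sum_single f).symm
      _ = ∑ v, f v • (Pi.single v 1 : V → ℤ) := by
        simp only [← Pi.single_smul', smul_eq_mul, mul_one]
      _ = _ := by
        simp only [smul_sub, Finset.sum_sub_distrib, ← Finset.sum_smul, hf, zero_smul, sub_zero]
  rw [hdecomp]
  exact H.sum_mem fun v _ => H.zsmul_mem (hH v) _

namespace Multigraph

lemma lapApply_apply_eq_sum (G : Multigraph V) (x : V → ℤ) (w : V) :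
    G.lapApply x w = ∑ u, (x w - x u) * (G.e u w : ℤ) := by
  simp only [lapApply, vdeg, sub_mul, Finset.sum_sub_distrib, Nat.cast_sum, Finset.mul_sum]
  congr 1
  exact Finset.sum_congr rfl fun u _ => by rw [G.symm w u]

def lapHom (G : Multigraph V) : (V → ℤ) →+ (V → ℤ) :=
  AddMonoidHom.mk' G.lapApply fun x y => by
    funext v
    simp only [lapApply, Pi.add_apply, add_mul, Finset.sum_add_distrib]
    ring

lemma linEquiv_zero_iff_neg_mem_range (G : Multigraph V) (f : V → ℤ) :
    G.LinEquiv f 0 ↔ -f ∈ G.lapHom.range := by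
  constructor
  · rintro ⟨x, hx⟩
    exact ⟨x, (neg_eq_of_add_eq_zero_right hx.symm).symm⟩
  · rintro ⟨x, hx⟩
    exact ⟨x, by rw [show G.lapApply x = -f from hx, add_neg_cancel]⟩

lemma lapApply_indicator_of_cut (G : Multigraph V) (S : Set V) {a b : V}
    (ha : a ∉ S) (hb : b ∈ S) (hab : G.e a b = 1)
    (hcut : ∀ u w, G.e u w ≠ 0 → s(u, w) ≠ s(a, b) → (u ∈ S ↔ w ∈ S)) :
    G.lapApply (S.indicator 1) = Pi.single b 1 - Pi.single a 1 := by
  have hne : a ≠ b := by rintro rfl; exact ha hb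
  have hba : G.e b a = 1 := by rw [G.symm, hab]
  have hterm : ∀ u w, s(u, w) ≠ s(a, b) →
      (S.indicator 1 w - S.indicator 1 u) * (G.e u w : ℤ) = 0 := by
    intro u w huw
    by_cases h0 : G.e u w = 0
    · simp [h0]
    · have hx : S.indicator (1 : V → ℤ) u = S.indicator 1 w := by
        by_cases hu : u ∈ S
        · simp [hu, (hcut u w h0 huw).mp hu]
        · simp [hu, mt (hcut u w h0 huw).mpr hu]
      rw [hx, sub_self, zero_mul]
  funext w
  rw [lapApply_apply_eq_sum]
  by_cases hwb : w = b
  · subst hwb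
    rw [Finset.sum_eq_single a (fun u _ hu => hterm u w (by simp [hu, hne.symm]))
      (by simp)]
    simp [ha, hb, hab, hne.symm]
  by_cases hwa : w = a
  · subst hwa
    rw [Finset.sum_eq_single b (fun u _ hu => hterm u w (by simp [hu, hne]))
      (by simp)]
    simp [ha, hb, hba, hne]
  rw [Finset.sum_eq_zero fun u _ => hterm u w (by simp [hwa, hwb])]
  simp [hwa, hwb]

lemma single_sub_single_mem_range_of_isBridge (G : Multigraph V) {a b : V} (hab : G.e a b = 1)
    (hbridge : G.toSimple.IsBridge s(a, b)) :
    Pi.single b 1 - Pi.single a 1 ∈ G.lapHom.range := by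
  set Γ := G.toSimple.deleteEdges {s(a, b)}
  refine ⟨{w | Γ.Reachable w b}.indicator 1, G.lapApply_indicator_of_cut _ ?_ .rfl hab ?_⟩
  · exact hbridge
  · intro u w huw hne
    have hadj : Γ.Adj u w := SimpleGraph.deleteEdges_adj.mpr ⟨huw, by simpa using hne⟩
    exact ⟨hadj.symm.reachable.trans, hadj.reachable.trans⟩

lemma IsTree.e_eq_one {G : Multigraph V} (hT : G.IsTree) {a b : V} (h : G.toSimple.Adj a b) :
    G.e a b = 1 :=
  le_antisymm (hT.2 a b) (Nat.one_le_iff_ne_zero.mpr h)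

end Multigraph

/-- on a tree, every divisor of degree `0` is linearly
equivalent to the zero divisor; in particular it is L-effective. -/
theorem tree_deg_zero_linEquiv_zero (G : Multigraph V) (hT : G.IsTree)
    (f : V → ℤ) (hdeg : degree f = 0) :
    G.LinEquiv f 0 ∧ G.LEffective f := by
  obtain ⟨r⟩ : Nonempty V := hT.1.connected.nonempty
  have hedge : ∀ a b, G.toSimple.Adj a b → Pi.single b 1 - Pi.single a 1 ∈ G.lapHom.range :=
    fun a b h => G.single_sub_single_mem_range_of_isBridge (hT.e_eq_one h)
      (SimpleGraph.isAcyclic_iff_forall_adj_isBridge.mp hT.1.isAcyclic h)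
  have hlin : G.LinEquiv f 0 := by
    rw [linEquiv_zero_iff_neg_mem_range]
    refine AddSubgroup.mem_of_sum_eq_zero r
      (fun v => (hT.1.connected.preconnected r v).single_sub_single_mem hedge) ?_
    simpa [degree] using hdeg
  exact ⟨hlin, 0, hlin, fun _ => le_rfl⟩
end

section
/- Let C_n be the cycle graph on n ≥ 3 vertices, let f be a good divisor on C_n (deg(f) = 0 and f linearly equivalent to 0), and let v and w be distinct vertices of C_n. Then the divisor f + ε_v − ε_w is bad, i.e., it has degree 0 and is not linearly equivalent to 0. -/
open Multigraph

variable {V : Type*} [Fintype V] [DecidableEq V]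

/-!
If `f` and `f + ε_v - ε_w` were both linearly equivalent to `0`, then `ε_v - ε_w = z Δ_G` for some
`z`. Summing `z Δ_G` over the set `S` where `z` is maximal leaves only the edges leaving `S`, each
contributing at least `1`, while the sum of `ε_v - ε_w` over `S` is at most `1`. On a connected graph
with even degrees, however, the cut of `S` is nonempty (`z` is not constant since `v ≠ w`) and even,
so it has at least two edges.
-/

namespace Multigraph

variable (G : Multigraph V)

theorem lapApply_apply (x : V → ℤ) (a : V) :
    G.lapApply x a = ∑ b, (x a - x b) * (G.e a b : ℤ) := by
  simp only [lapApply, vdeg, Nat.cast_sum, Finset.mul_sum, ← Finset.sum_sub_distrib, G.symm _ a]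
  exact Finset.sum_congr rfl fun b _ => by ring

theorem lapApply_sub (x y : V → ℤ) : G.lapApply (x - y) = G.lapApply x - G.lapApply y := by
  ext a
  simp only [lapApply_apply, Pi.sub_apply, ← Finset.sum_sub_distrib]
  exact Finset.sum_congr rfl fun b _ => by ring

theorem lapApply_const (c : ℤ) : G.lapApply (fun _ => c) = 0 := by
  ext a
  simp [lapApply_apply]

theorem exists_lapApply_eq_of_linEquiv_zero {f d : V → ℤ} (hf : G.LinEquiv f 0)
    (hfd : G.LinEquiv (f + d) 0) : ∃ z, G.lapApply z = d := by
  obtain ⟨y, hy⟩ := hf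
  obtain ⟨x, hx⟩ := hfd
  refine ⟨y - x, ?_⟩
  rw [lapApply_sub]
  ext a
  have hya := congrFun hy a
  have hxa := congrFun hx a
  simp only [Pi.add_apply, Pi.sub_apply, Pi.zero_apply] at hya hxa ⊢
  omega

def cutSize (S : Finset V) : ℕ := ∑ a ∈ S, ∑ b ∈ Sᶜ, G.e a b

theorem even_sum_sum_e (S : Finset V) : Even (∑ a ∈ S, ∑ b ∈ S, G.e a b) := by
  induction S using Finset.induction_on with
  | empty => simp
  | insert a S ha ih =>
    simp only [Finset.sum_insert ha, Finset.sum_add_distrib, G.loopless, zero_add]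
    have h_symm : ∑ x ∈ S, G.e x a = ∑ b ∈ S, G.e a b :=
      Finset.sum_congr rfl fun x _ => G.symm x a
    rw [h_symm, ← add_assoc, ← two_mul]
    exact (even_two_mul _).add ih

theorem sum_vdeg_eq (S : Finset V) :
    ∑ a ∈ S, G.vdeg a = ∑ a ∈ S, ∑ b ∈ S, G.e a b + G.cutSize S := by
  rw [cutSize, ← Finset.sum_add_distrib]
  exact Finset.sum_congr rfl fun a _ => (Finset.sum_add_sum_compl S _).symm

theorem even_cutSize (hG_even : ∀ v, Even (G.vdeg v)) (S : Finset V) :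
    Even (G.cutSize S) := by
  have h_sum : Even (∑ a ∈ S, G.vdeg a) := Finset.even_sum _ fun a _ => hG_even a
  rw [sum_vdeg_eq, Nat.even_add] at h_sum
  exact h_sum.mp (G.even_sum_sum_e S)

theorem cutSize_ne_zero (hG : G.Connected) {S : Finset V} (hS : S.Nonempty)
    (hSu : S ≠ Finset.univ) : G.cutSize S ≠ 0 := by
  obtain ⟨s, hs⟩ := hS
  obtain ⟨t, ht⟩ : ∃ t, t ∉ S := by
    by_contra! h
    exact hSu (Finset.eq_univ_of_forall h)
  obtain ⟨p⟩ := hG.preconnected s t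
  obtain ⟨d, -, hd₁, hd₂⟩ := p.exists_boundary_dart (S : Set V) hs ht
  intro h0
  exact d.adj <| Finset.sum_eq_zero_iff.mp (Finset.sum_eq_zero_iff.mp h0 _ hd₁) _
    (Finset.mem_compl.mpr hd₂)

theorem sum_lapApply_eq_sum_cut (z : V → ℤ) (S : Finset V) :
    ∑ a ∈ S, G.lapApply z a = ∑ a ∈ S, ∑ b ∈ Sᶜ, (z a - z b) * (G.e a b : ℤ) := by
  set inner := ∑ a ∈ S, ∑ b ∈ S, (z a - z b) * (G.e a b : ℤ)
  have h_inner : inner = -inner := by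
    calc inner = ∑ b ∈ S, ∑ a ∈ S, (z a - z b) * (G.e a b : ℤ) := Finset.sum_comm
      _ = -inner := by
        simp only [inner, ← Finset.sum_neg_distrib]
        exact Finset.sum_congr rfl fun a _ => Finset.sum_congr rfl fun b _ => by rw [G.symm]; ring
  simp only [lapApply_apply, ← Finset.sum_add_sum_compl S (fun b => (z _ - z b) * _),
    Finset.sum_add_distrib]
  omega

theorem cutSize_le_sum_lapApply {z : V → ℤ} {S : Finset V}
    (hz : ∀ a ∈ S, ∀ b ∉ S, z b < z a) : (G.cutSize S : ℤ) ≤ ∑ a ∈ S, G.lapApply z a := by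
  rw [sum_lapApply_eq_sum_cut, cutSize]
  push_cast
  refine Finset.sum_le_sum fun a ha => Finset.sum_le_sum fun b hb => ?_
  have := hz a ha b (Finset.mem_compl.mp hb)
  nlinarith [(G.e a b).cast_nonneg (α := ℤ)]

theorem lapApply_ne_epsDiv_sub_epsDiv (hG : G.Connected) (hG_even : ∀ v, Even (G.vdeg v))
    {v w : V} (hvw : v ≠ w) (z : V → ℤ) : G.lapApply z ≠ epsDiv v - epsDiv w := by
  intro hz
  obtain ⟨m, -, hm⟩ := Finset.exists_max_image Finset.univ z ⟨v, Finset.mem_univ v⟩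
  set S := Finset.univ.filter fun a => z a = z m
  by_cases hSu : S = Finset.univ
  · have hconst : z = fun _ => z m := funext fun a => by
      simpa [S] using (Finset.ext_iff.mp hSu a).mpr (Finset.mem_univ a)
    have := congrFun hz v
    rw [hconst, lapApply_const] at this
    simp [epsDiv, hvw] at this
  have h_cut_ge : 2 ≤ G.cutSize S := by
    have := G.cutSize_ne_zero hG ⟨m, by simp [S]⟩ hSu
    obtain ⟨k, hk⟩ := G.even_cutSize hG_even S
    omega
  have h_cut_le : (G.cutSize S : ℤ) ≤ 1 := by
    refine (G.cutSize_le_sum_lapApply (z := z) (S := S) fun a ha b hb => ?_).trans ?_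
    · simp only [S, Finset.mem_filter, Finset.mem_univ, true_and] at ha hb
      exact ha ▸ lt_of_le_of_ne (hm b (Finset.mem_univ b)) hb
    · simp only [hz, Pi.sub_apply, Finset.sum_sub_distrib, epsDiv, Finset.sum_ite_eq']
      split_ifs <;> omega
  omega

theorem degree_add_epsDiv_sub_epsDiv (f : V → ℤ) (v w : V) :
    degree (f + epsDiv v - epsDiv w) = degree f := by
  simp [degree, Finset.sum_add_distrib, Finset.sum_sub_distrib, epsDiv]

end Multigraph

theorem good_add_eps_sub_eps_bad_general (G : Multigraph V)
    (hC : G.IsCycleGraph)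
    (f : V → ℤ) (hf : G.Good f) (v w : V) (hvw : v ≠ w) :
    G.Bad (f + epsDiv v - epsDiv w) := by
  obtain ⟨hdeg, hf0⟩ := hf
  refine ⟨(degree_add_epsDiv_sub_epsDiv f v w).trans hdeg, fun hbad => ?_⟩
  rw [add_sub_assoc] at hbad
  obtain ⟨z, hz⟩ := G.exists_lapApply_eq_of_linEquiv_zero hf0 hbad
  have h_even : ∀ u, Even (G.vdeg u) := fun u => hC.2 u ▸ even_two
  exact G.lapApply_ne_epsDiv_sub_epsDiv hC.1 h_even hvw z hz

/-- on a cycle with `n ≥ 3` vertices, if `f` is good and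
`v ≠ w`, then `f + ε_v − ε_w` is bad. -/
theorem good_add_eps_sub_eps_bad (G : Multigraph V)
    (hC : G.IsCycleGraph) (hcard : 3 ≤ Fintype.card V)
    (f : V → ℤ) (hf : G.Good f) (v w : V) (hvw : v ≠ w) :
    G.Bad (f + epsDiv v - epsDiv w) :=
  good_add_eps_sub_eps_bad_general G hC f hf v w hvw
end
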